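/- Let K be a number field with ring of integers O_K, let Γ be a finitely generated group, and let ρ: Γ → GL(n, K) be a representation. Then the following are equivalent: (i) there exists an O_K-submodule L of K^n that is finitely generated over O_K, spans K^n over K, and satisfies ρ(γ)·L = L for every γ ∈ Γ; (ii) for every finite place v of K (i.e., every nonzero prime ideal of O_K), the image of ρ(Γ) in GL(n, K_v) under the completion embedding K ↪ K_v is bounded, meaning there is a constant C such that every matrix entry of every ρ(γ), γ ∈ Γ, has v-adic absolute value at most C. -/

import Mathlib

/-!
A lattice `L` spanning `Kⁿ` is squeezed between `a • 𝓞ⁿ` and `b⁻¹ • 𝓞ⁿ` for some nonzero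
`a, b ∈ 𝓞`, so every matrix stabilising `L` has entries in `(ab)⁻¹ 𝓞`, and these are bounded at
every place. Conversely, the entries of finitely many generators of `Γ` and of their inverses are
integral away from a finite set `S` of places, hence so are all entries of `ρ(Γ)`; together with
the bounds at the places of `S` this gives a single `d ≠ 0` with `d • ρ(Γ) ⊆ Mₙ(𝓞)`. The sum of
the translates `ρ(γ) 𝓞ⁿ` then contains `𝓞ⁿ`, lies in `d⁻¹ • 𝓞ⁿ`, and is `ρ(Γ)`-stable.
-/

open IsDedekindDomain NumberField
open scoped WithZero Matrix

theorem MonoidHom.map_mem_of_closure_eq_top {G M : Type*} [Group G] [Monoid M] (f : G →* M)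
    {P : Submonoid M} {T : Set G} (hT : Subgroup.closure T = ⊤)
    (hP : ∀ t ∈ T, f t ∈ P ∧ f t⁻¹ ∈ P) (g : G) : f g ∈ P := by
  have hg : g ∈ Subgroup.closure T := hT ▸ Subgroup.mem_top g
  induction hg using Subgroup.closure_induction'' with
  | mem t ht => exact (hP t ht).1
  | inv_mem t ht => exact (hP t ht).2
  | one => simp [P.one_mem]
  | mul g h _ _ hg hh => simpa using P.mul_mem hg hh

namespace IsDedekindDomain.HeightOneSpectrum

variable {R : Type*} [CommRing R] [IsDedekindDomain R] {K : Type*} [Field K] [Algebra R K]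
  [IsFractionRing R K]

theorem exists_ne_zero_valuation_mul_le_one (S : Finset (HeightOneSpectrum R))
    (C : HeightOneSpectrum R → ℤᵐ⁰) :
    ∃ d : R, d ≠ 0 ∧ ∀ v ∈ S, v.valuation K (algebraMap R K d) * C v ≤ 1 := by
  classical
  set k : HeightOneSpectrum R → ℕ := fun v => (WithZero.log (C v)).toNat
  have hprod : ∏ v ∈ S, v.asIdeal ^ k v ≠ ⊥ :=
    Finset.prod_ne_zero_iff.mpr fun v _ => pow_ne_zero (k v) v.ne_bot
  obtain ⟨d, hdS, hd0⟩ := Submodule.exists_mem_ne_zero_of_ne_bot hprod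
  refine ⟨d, hd0, fun v hv => ?_⟩
  have hd : v.valuation K (algebraMap R K d) ≤ WithZero.exp (-(k v : ℤ)) := by
    rw [valuation_of_algebraMap, intValuation_le_pow_iff_dvd, Ideal.dvd_span_singleton]
    exact Ideal.le_of_dvd (Finset.dvd_prod_of_mem _ hv) hdS
  have hC : C v ≤ WithZero.exp (k v : ℤ) :=
    WithZero.le_exp_log.trans (WithZero.exp_le_exp.mpr (Int.self_le_toNat _))
  calc v.valuation K (algebraMap R K d) * C v
      ≤ WithZero.exp (-(k v : ℤ)) * WithZero.exp (k v : ℤ) := mul_le_mul' hd hC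
    _ = 1 := by rw [← WithZero.exp_add, neg_add_cancel, WithZero.exp_zero]

theorem exists_ne_zero_forall_mul_mem_one {ι : Type*} {x : ι → K}
    (hbdd : ∀ v : HeightOneSpectrum R, ∃ C, ∀ i, v.valuation K (x i) ≤ C)
    (hfin : {v : HeightOneSpectrum R | ∃ i, 1 < v.valuation K (x i)}.Finite) :
    ∃ d : R, d ≠ 0 ∧ ∀ i, algebraMap R K d * x i ∈ (1 : Submodule R K) := by
  choose C hC using hbdd
  obtain ⟨d, hd0, hd⟩ := exists_ne_zero_valuation_mul_le_one (K := K) hfin.toFinset C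
  refine ⟨d, hd0, fun i => Submodule.mem_one.mpr ?_⟩
  refine RingHom.mem_range.mp (mem_integers_of_valuation_le_one K _ fun v => ?_)
  rw [map_mul]
  by_cases hv : v ∈ hfin.toFinset
  · exact (mul_le_mul_right (hC v i) _).trans (hd v hv)
  · have hxi : v.valuation K (x i) ≤ 1 :=
      not_lt.mp fun hlt => hv (hfin.mem_toFinset.mpr ⟨i, hlt⟩)
    exact mul_le_one' (v.valuation_le_one d) hxi

theorem valuation_le_inv_of_mul_mem_one (v : HeightOneSpectrum R) {c : R} (hc : c ≠ 0) {x : K}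
    (hx : algebraMap R K c * x ∈ (1 : Submodule R K)) :
    v.valuation K x ≤ (v.valuation K (algebraMap R K c))⁻¹ := by
  obtain ⟨r, hr⟩ := Submodule.mem_one.mp hx
  have hc' : 0 < v.valuation K (algebraMap R K c) :=
    zero_lt_iff.mpr ((Valuation.ne_zero_iff _).mpr
      (IsFractionRing.to_map_ne_zero_of_mem_nonZeroDivisors (mem_nonZeroDivisors_of_ne_zero hc)))
  rw [← one_mul (_⁻¹), le_mul_inv_iff₀' hc', ← map_mul, ← hr]
  exact v.valuation_le_one r

theorem finite_setOf_exists_one_lt_valuation_entry {Γ : Type*} [Group Γ] (hΓ : Group.FG Γ)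
    {ι : Type*} [Fintype ι] [DecidableEq ι] (ρ : Γ →* GL ι K) :
    {v : HeightOneSpectrum R | ∃ γ i j, 1 < v.valuation K ((ρ γ : Matrix ι ι K) i j)}.Finite := by
  obtain ⟨T, hT⟩ := hΓ.out
  refine (T.finite_toSet.biUnion fun t _ => Set.finite_iUnion fun i => Set.finite_iUnion fun j =>
    (Support.finite R ((ρ t : Matrix ι ι K) i j)).union
      (Support.finite R ((ρ t⁻¹ : Matrix ι ι K) i j))).subset ?_
  rintro v ⟨γ, i, j, hv⟩
  by_contra hS
  simp only [Set.mem_iUnion, Set.mem_union, not_exists, not_or] at hS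
  have hγ := ((Units.coeHom _).comp ρ).map_mem_of_closure_eq_top
    (P := (v.valuation K).integer.matrix.toSubmonoid) hT
    (fun t ht => ⟨fun i j => (Valuation.mem_integer_iff _ _).mpr (not_lt.mp (hS t ht i j).1),
      fun i j => (Valuation.mem_integer_iff _ _).mpr (not_lt.mp (hS t ht i j).2)⟩) γ
  exact not_le.mpr hv (hγ i j)

end IsDedekindDomain.HeightOneSpectrum

theorem Submodule.exists_smul_mem_of_fg_of_le_span {R : Type*} [CommRing R] (S : Submonoid R)
    {K V : Type*} [CommRing K] [Algebra R K] [IsLocalization S K] [AddCommMonoid V] [Module R V]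
    [Module K V] [IsScalarTower R K V] {N L : Submodule R V} (hN : N.FG)
    (hNL : N ≤ (span K (L : Set V)).restrictScalars R) : ∃ s ∈ S, ∀ x ∈ N, s • x ∈ L := by
  induction N, hN using Submodule.fg_induction with
  | singleton x =>
    obtain ⟨s, hs⟩ := multiple_mem_span_of_mem_localization_span S K (L : Set V) x
      (hNL (mem_span_singleton_self x))
    rw [span_eq, Submonoid.smul_def] at hs
    refine ⟨s, s.2, fun y hy => ?_⟩
    obtain ⟨r, rfl⟩ := mem_span_singleton.mp hy
    rw [smul_comm]
    exact L.smul_mem r hs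
  | sup N₁ N₂ _ _ ih₁ ih₂ =>
    obtain ⟨s₁, hs₁, h₁⟩ := ih₁ (le_sup_left.trans hNL)
    obtain ⟨s₂, hs₂, h₂⟩ := ih₂ (le_sup_right.trans hNL)
    refine ⟨s₂ * s₁, S.mul_mem hs₂ hs₁, fun x hx => ?_⟩
    obtain ⟨y, hy, z, hz, rfl⟩ := mem_sup.mp hx
    rw [smul_add, mul_smul, mul_comm, mul_smul]
    exact L.add_mem (L.smul_mem _ (h₁ y hy)) (L.smul_mem _ (h₂ z hz))

theorem Submodule.map_iSup_map_eq {Γ R V : Type*} [Group Γ] [Semiring R] [AddCommMonoid V]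
    [Module R V] (f : Γ → V →ₗ[R] V) (hf : ∀ g h, f (g * h) = f g ∘ₗ f h)
    (N : Submodule R V) (g : Γ) : (⨆ h, N.map (f h)).map (f g) = ⨆ h, N.map (f h) := by
  simp_rw [map_iSup, ← map_comp, ← hf]
  exact (Equiv.mulLeft g).iSup_comp (g := fun h => N.map (f h))

section StandardLattice

variable (R K ι : Type*) [CommRing R] [Field K] [Algebra R K]

def standardLattice : Submodule R (ι → K) := Submodule.pi Set.univ fun _ : ι => (1 : Submodule R K)

variable {R K ι}

theorem mem_standardLattice {x : ι → K} :
    x ∈ standardLattice R K ι ↔ ∀ i, x i ∈ (1 : Submodule R K) := by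
  simp [standardLattice, Submodule.mem_pi]

theorem standardLattice_fg [Finite ι] : (standardLattice R K ι).FG :=
  Submodule.fg_pi fun _ => by rw [Submodule.one_eq_span]; exact Submodule.fg_span_singleton 1

theorem single_one_mem_standardLattice [DecidableEq ι] (j : ι) :
    Pi.single j 1 ∈ standardLattice R K ι := by
  refine mem_standardLattice.mpr fun i => ?_
  rcases eq_or_ne i j with rfl | hij
  · exact Submodule.mem_one.mpr ⟨1, by simp⟩
  · simp [hij]

variable (R) in
theorem span_standardLattice [Finite ι] :
    Submodule.span K (standardLattice R K ι : Set (ι → K)) = ⊤ := by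
  classical
  rw [eq_top_iff, ← (Pi.basisFun K ι).span_eq]
  exact Submodule.span_mono (Set.range_subset_iff.mpr fun j => by
    simpa using single_one_mem_standardLattice j)

theorem mulVec_mem_standardLattice [Fintype ι] {M : Matrix ι ι K}
    (hM : ∀ i j, M i j ∈ (1 : Submodule R K)) {x : ι → K} (hx : x ∈ standardLattice R K ι) :
    M *ᵥ x ∈ standardLattice R K ι := by
  rw [mem_standardLattice] at hx ⊢
  exact fun i => Submodule.sum_mem _ fun j _ => by
    simpa using Submodule.mul_mem_mul (hM i j) (hx j)

variable [IsDomain R] [IsFractionRing R K] [Fintype ι] [DecidableEq ι]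

theorem exists_forall_mul_entry_mem_one_of_fg_of_span_eq_top {L : Submodule R (ι → K)} (hL : L.FG)
    (hspan : Submodule.span K (L : Set (ι → K)) = ⊤) :
    ∃ c : R, c ≠ 0 ∧ ∀ M : Matrix ι ι K, (∀ x ∈ L, M *ᵥ x ∈ L) →
      ∀ i j, algebraMap R K c * M i j ∈ (1 : Submodule R K) := by
  obtain ⟨a, ha0, ha⟩ := Submodule.exists_smul_mem_of_fg_of_le_span (nonZeroDivisors R)
    (K := K) standardLattice_fg (N := standardLattice R K ι) (L := L) (by simp [hspan])
  obtain ⟨b, hb0, hb⟩ := Submodule.exists_smul_mem_of_fg_of_le_span (nonZeroDivisors R)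
    (K := K) hL (L := standardLattice R K ι) (by simp [span_standardLattice])
  refine ⟨b * a, nonZeroDivisors.ne_zero (mul_mem hb0 ha0), fun M hM i j => ?_⟩
  have h := hb _ (hM _ (ha _ (single_one_mem_standardLattice j)))
  rw [mem_standardLattice] at h
  simp only [Matrix.mulVec_smul, Matrix.mulVec_single_one, Pi.smul_apply] at h
  simpa [Algebra.smul_def, mul_assoc] using h i

theorem exists_invariant_lattice_of_mul_entry_mem_one [IsNoetherianRing R] {Γ : Type*} [Group Γ]
    (ρ : Γ →* GL ι K) {d : R} (hd : d ≠ 0)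
    (h : ∀ γ i j, algebraMap R K d * (ρ γ : Matrix ι ι K) i j ∈ (1 : Submodule R K)) :
    ∃ L : Submodule R (ι → K), L.FG ∧ Submodule.span K (L : Set (ι → K)) = ⊤ ∧
      ∀ γ, L.map (((ρ γ : Matrix ι ι K).mulVecLin).restrictScalars R) = L := by
  set f : Γ → (ι → K) →ₗ[R] (ι → K) := fun γ => ((ρ γ : Matrix ι ι K).mulVecLin).restrictScalars R
  have hf : ∀ g h, f (g * h) = f g ∘ₗ f h := fun g h => by
    simp [f, Matrix.mulVecLin_mul]
  refine ⟨⨆ γ, (standardLattice R K ι).map (f γ), ?_, ?_, Submodule.map_iSup_map_eq f hf _⟩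
  · have hinj : Function.Injective (d • LinearMap.id : (ι → K) →ₗ[R] (ι → K)) :=
      smul_right_injective _ hd
    refine Submodule.fg_of_fg_map_injective _ hinj (standardLattice_fg.of_le ?_)
    refine Submodule.map_le_iff_le_comap.mpr (iSup_le fun γ => ?_)
    refine Submodule.map_le_iff_le_comap.mpr fun x hx => ?_
    have hdρ : ∀ i j, (d • (ρ γ : Matrix ι ι K)) i j ∈ (1 : Submodule R K) := fun i j => by
      simpa [Algebra.smul_def] using h γ i j
    simpa [f, Matrix.smul_mulVec] using mulVec_mem_standardLattice hdρ hx
  · have h1 : standardLattice R K ι ≤ ⨆ γ, (standardLattice R K ι).map (f γ) :=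
      le_iSup_of_le 1 (by simp [f])
    rw [eq_top_iff, ← span_standardLattice R]
    exact Submodule.span_mono h1

end StandardLattice

/-- **Bass's characterization of integrality** for a representation
`ρ : Γ → GL(n, K)` of a finitely generated group `Γ` over a number field `K`:
`ρ(Γ)` stabilizes an `𝓞 K`-lattice in `Kⁿ` if and only if, for every finite
place `v` of `K`, the image of `ρ(Γ)` in `GL(n, K_v)` is bounded (all matrix
entries have `v`-adic absolute value bounded by a constant). -/
theorem integral_iff_bounded_at_all_finite_places
    (K : Type*) [Field K] [NumberField K]
    (Γ : Type*) [Group Γ] (hΓ : Group.FG Γ)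
    (n : ℕ) (ρ : Γ →* GL (Fin n) K) :
    (∃ L : Submodule (𝓞 K) (Fin n → K), L.FG ∧
        Submodule.span K (L : Set (Fin n → K)) = ⊤ ∧
        ∀ γ : Γ,
          L.map (((ρ γ : Matrix (Fin n) (Fin n) K).mulVecLin).restrictScalars (𝓞 K)) = L)
      ↔
    (∀ v : HeightOneSpectrum (𝓞 K), ∃ C : WithZero (Multiplicative ℤ), ∀ γ : Γ, ∀ i j : Fin n,
        Valued.v (((ρ γ : Matrix (Fin n) (Fin n) K) i j : K) :
          v.adicCompletion K) ≤ C) := by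
  simp only [HeightOneSpectrum.valuedAdicCompletion_eq_valuation']
  constructor
  · rintro ⟨L, hL, hspan, hinv⟩ v
    obtain ⟨c, hc, hcM⟩ := exists_forall_mul_entry_mem_one_of_fg_of_span_eq_top hL hspan
    exact ⟨_, fun γ i j => v.valuation_le_inv_of_mul_mem_one hc
      (hcM _ (fun x hx => hinv γ ▸ Submodule.mem_map_of_mem hx) i j)⟩
  · intro hbdd
    obtain ⟨d, hd, hint⟩ := HeightOneSpectrum.exists_ne_zero_forall_mul_mem_one
      (x := fun p : Γ × Fin n × Fin n => (ρ p.1 : Matrix (Fin n) (Fin n) K) p.2.1 p.2.2)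
      (fun v => let ⟨C, hC⟩ := hbdd v; ⟨C, fun p => hC _ _ _⟩)
      ((HeightOneSpectrum.finite_setOf_exists_one_lt_valuation_entry hΓ ρ).subset
        fun v ⟨⟨γ, i, j⟩, h⟩ => ⟨γ, i, j, h⟩)
    exact exists_invariant_lattice_of_mul_entry_mem_one ρ hd fun γ i j => hint (γ, i, j)
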